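/- arXiv:2205.11691 — 3 statements merged into one kernel-verified Lean document; each statement's English description precedes it below -/
import Mathlib

section
/- (Theorem 2, sum aggregation.) Let k, F be positive integers. There exist matrices A ∈ ℝ^{(F+1)×(F·k)} and B ∈ ℝ^{F×(F·k)} such that for all x_1,…,x_k ∈ ℝ^F and all i ∈ {1,…,F}: ∑_{r=1}^{F·k} B_{i,r} ∏_{ℓ=1}^k ( ∑_{j=1}^{F+1} A_{j,r} (x̃_ℓ)_j ) = ∑_{ℓ=1}^k (x_ℓ)_i; that is, a CP layer of rank F·k can compute the sum aggregation function over k vectors in ℝ^F. -/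
/-! For distinct nodes `v₁, …, vₖ`, Lagrange interpolation applied to `P - ∏ₘ (X - vₘ)` (degree
`< k`) gives `∑ₘ P(vₘ) / ∏_{j ≠ m} (vₘ - vⱼ) = coeff_{k-1} P + ∑ₘ vₘ` for every monic `P` of degree
`k`. For `P = ∏ₗ (X + yₗ)` the coefficient is `∑ₗ yₗ`, so nodes with `∑ₘ vₘ = 0` express `∑ₗ yₗ`
as a sum of `k` products of affine forms; one such block per output coordinate gives rank `F·k`. -/
/-- Homogeneous coordinates of a vector `x ∈ ℝ^F`: append an entry equal to `1`. -/
def homCoord {F : ℕ} (x : Fin F → ℝ) : Fin (F + 1) → ℝ := Fin.snoc x 1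

open Polynomial Finset

namespace Lagrange

variable {K ι κ : Type*} [Field K] [DecidableEq ι] {s : Finset ι} {v : ι → K}

theorem sum_eval_div_eq_coeff_add_sum (hvs : Set.InjOn v s) (hs : s.Nonempty) {P : K[X]}
    (hP : P.Monic) (hdeg : P.natDegree = #s) :
    ∑ i ∈ s, P.eval (v i) / ∏ j ∈ s.erase i, (v i - v j) = P.coeff (#s - 1) + ∑ i ∈ s, v i := by
  have hPdeg : P.degree = #s := by rw [degree_eq_natDegree hP.ne_zero, hdeg]
  have hlt : (P - nodal s v).degree < #s :=
    hPdeg ▸ degree_sub_lt_left (by rw [hPdeg, degree_nodal]) hP.ne_zero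
      (by rw [hP.leadingCoeff, nodal_monic.leadingCoeff])
  calc ∑ i ∈ s, P.eval (v i) / ∏ j ∈ s.erase i, (v i - v j)
      = ∑ i ∈ s, (P - nodal s v).eval (v i) / ∏ j ∈ s.erase i, (v i - v j) :=
        sum_congr rfl fun i hi ↦ by rw [eval_sub, eval_nodal_at_node hi, sub_zero]
    _ = (P - nodal s v).coeff (#s - 1) := (coeff_eq_sum hvs hlt).symm
    _ = P.coeff (#s - 1) + ∑ i ∈ s, v i := by
        rw [coeff_sub, nodal, prod_X_sub_C_coeff_card_pred s v hs.card_pos, sub_neg_eq_add]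

theorem sum_prod_add_div_eq_sum_add_sum (hvs : Set.InjOn v s) (hs : s.Nonempty) {t : Finset κ}
    (hts : #t = #s) (y : κ → K) :
    ∑ i ∈ s, (∏ ℓ ∈ t, (y ℓ + v i)) / ∏ j ∈ s.erase i, (v i - v j)
      = ∑ ℓ ∈ t, y ℓ + ∑ i ∈ s, v i := by
  have hP := sum_eval_div_eq_coeff_add_sum hvs hs (monic_prod_X_sub_C (fun ℓ ↦ -y ℓ) t)
    (by rw [natDegree_finsetProd_X_sub_C_eq_card, hts])
  rw [← hts, prod_X_sub_C_coeff_card_pred t _ (hts ▸ hs.card_pos)] at hP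
  simpa [eval_prod, add_comm] using hP

end Lagrange

theorem exists_injective_sum_eq_zero (k : ℕ) :
    ∃ v : Fin k → ℝ, Function.Injective v ∧ ∑ m, v m = 0 := by
  refine ⟨fun m ↦ m - (∑ i : Fin k, (i : ℝ)) / k, fun a b hab ↦ Fin.ext (by simpa using hab), ?_⟩
  rcases k.eq_zero_or_pos with rfl | hk
  · simp
  · simp [sum_sub_distrib, mul_div_cancel₀ _ (Nat.cast_ne_zero.2 hk.ne' : (k : ℝ) ≠ 0)]

theorem sum_snoc_mul_homCoord {F : ℕ} (a x : Fin F → ℝ) (c : ℝ) :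
    ∑ j, Fin.snoc (α := fun _ ↦ ℝ) a c j * homCoord x j = ∑ i, a i * x i + c := by
  simp [Fin.sum_univ_castSucc, homCoord]

theorem cp_layer_computes_sum_aggregation_general
    (k F : ℕ) (hk : 0 < k) :
    ∃ (A : Fin (F + 1) → Fin (F * k) → ℝ) (B : Fin F → Fin (F * k) → ℝ),
      ∀ (x : Fin k → Fin F → ℝ) (i : Fin F),
        ∑ r : Fin (F * k),
            B i r * ∏ ℓ : Fin k, (∑ j : Fin (F + 1), A j r * homCoord (x ℓ) j)
          = ∑ ℓ : Fin k, x ℓ i := by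
  obtain ⟨v, hv, hv_sum⟩ := exists_injective_sum_eq_zero k
  let w : Fin k → ℝ := fun m ↦ (∏ j ∈ univ.erase m, (v m - v j))⁻¹
  let e : Fin (F * k) ≃ Fin F × Fin k := finProdFinEquiv.symm
  -- column `r ≃ (i, m)` computes `w m * ∏ ℓ, (x ℓ i + v m)` and feeds only output `i`
  let A : Fin (F + 1) → Fin (F * k) → ℝ := fun j r ↦
    Fin.snoc (α := fun _ ↦ ℝ) (Pi.single (e r).1 1) (v (e r).2) j
  let B : Fin F → Fin (F * k) → ℝ := fun i r ↦ if (e r).1 = i then w (e r).2 else 0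
  refine ⟨A, B, fun x i ↦ ?_⟩
  calc ∑ r, B i r * ∏ ℓ, (∑ j, A j r * homCoord (x ℓ) j)
      = ∑ m, w m * ∏ ℓ, (x ℓ i + v m) := by
        rw [← e.symm.sum_comp, Fintype.sum_prod_type]
        simp [A, B, sum_snoc_mul_homCoord, Pi.single_apply]
    _ = ∑ ℓ, x ℓ i + ∑ m, v m := by
        simpa only [div_eq_inv_mul] using Lagrange.sum_prod_add_div_eq_sum_add_sum hv.injOn
          (univ_nonempty_iff.2 ⟨⟨0, hk⟩⟩) rfl (fun ℓ ↦ x ℓ i)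
    _ = ∑ ℓ, x ℓ i := by rw [hv_sum, add_zero]

/-- Theorem 2 (sum aggregation): a CP layer of rank `F·k` with linear activation can
compute the sum aggregation function over `k` vectors in `ℝ^F`. -/
theorem cp_layer_computes_sum_aggregation
    (k F : ℕ) (hk : 0 < k) (hF : 0 < F) :
    ∃ (A : Fin (F + 1) → Fin (F * k) → ℝ) (B : Fin F → Fin (F * k) → ℝ),
      ∀ (x : Fin k → Fin F → ℝ) (i : Fin F),
        ∑ r : Fin (F * k),
            B i r * ∏ ℓ : Fin k, (∑ j : Fin (F + 1), A j r * homCoord (x ℓ) j)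
          = ∑ ℓ : Fin k, x ℓ i :=
  cp_layer_computes_sum_aggregation_general k F hk
end

section
/- (Theorem 2, mean aggregation.) Let k, F be positive integers. There exist matrices A ∈ ℝ^{(F+1)×(F·k)} and B ∈ ℝ^{F×(F·k)} such that for all x_1,…,x_k ∈ ℝ^F and all i ∈ {1,…,F}: ∑_{r=1}^{F·k} B_{i,r} ∏_{ℓ=1}^k ( ∑_{j=1}^{F+1} A_{j,r} (x̃_ℓ)_j ) = (1/k) ∑_{ℓ=1}^k (x_ℓ)_i; that is, a CP layer of rank F·k can compute the mean aggregation function over k vectors in ℝ^F. -/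
open Polynomial Finset

namespace Lagrange

variable {K ι : Type*} [Field K] [DecidableEq ι] {s : Finset ι} {v : ι → K}

theorem nextCoeff_eq_nextCoeff_nodal_add_sum (hvs : Set.InjOn v s) {P : K[X]} (hP : P.Monic)
    (hdeg : P.natDegree = #s) :
    P.nextCoeff = (nodal s v).nextCoeff
      + ∑ i ∈ s, P.eval (v i) / ∏ j ∈ s.erase i, (v i - v j) := by
  rcases s.eq_empty_or_nonempty with rfl | hs
  · simp [nextCoeff, hdeg]
  have hPdeg : P.degree = #s := by rw [degree_eq_natDegree hP.ne_zero, hdeg]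
  have hlt : (P - nodal s v).degree < #s := hPdeg ▸
    degree_sub_lt_left (hPdeg.trans degree_nodal.symm) hP.ne_zero
      (hP.leadingCoeff.trans nodal_monic.leadingCoeff.symm)
  have hcoeff := coeff_eq_sum hvs hlt
  simp only [coeff_sub, eval_sub] at hcoeff
  rw [nextCoeff_of_natDegree_pos (hdeg ▸ hs.card_pos),
    nextCoeff_of_natDegree_pos (natDegree_nodal (s := s) (v := v) ▸ hs.card_pos), hdeg,
    natDegree_nodal, eq_add_of_sub_eq' hcoeff]
  congr 1
  refine sum_congr rfl fun i hi => ?_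
  rw [eval_nodal_at_node hi, sub_zero]

end Lagrange

theorem exists_injective_sum_eq_zero_s11 {K : Type*} [Field K] [CharZero K] (k : ℕ) :
    ∃ u : Fin k → K, Function.Injective u ∧ ∑ r, u r = 0 := by
  set m : K := (∑ r : Fin k, (r : K)) / k
  refine ⟨fun r => (r : K) - m, fun r s h => by simpa [Fin.val_inj] using h, ?_⟩
  rcases eq_or_ne k 0 with rfl | hk
  · simp
  · simp [sum_sub_distrib, m, mul_div_cancel₀ _ (Nat.cast_ne_zero.mpr hk : (k : K) ≠ 0)]

theorem exists_sum_mul_prod_add_eq_sum {K : Type*} [Field K] [CharZero K] (k : ℕ) :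
    ∃ u β : Fin k → K, ∀ a : Fin k → K, ∑ r, β r * ∏ ℓ, (a ℓ + u r) = ∑ ℓ, a ℓ := by
  obtain ⟨u, hinj, hsum⟩ := exists_injective_sum_eq_zero_s11 (K := K) k
  refine ⟨u, fun r => (∏ j ∈ univ.erase r, (u r - u j))⁻¹, fun a => ?_⟩
  set P : K[X] := ∏ ℓ, (X + C (a ℓ))
  have hmonic : ∀ ℓ ∈ univ, (X + C (a ℓ)).Monic := fun ℓ _ => monic_X_add_C _
  have hP : P.Monic := monic_prod_of_monic _ _ hmonic
  have hdeg : P.natDegree = #(univ : Finset (Fin k)) := by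
    simp [P, natDegree_prod_of_monic _ _ hmonic]
  have key := Lagrange.nextCoeff_eq_nextCoeff_nodal_add_sum hinj.injOn hP hdeg
  rw [Monic.nextCoeff_prod _ _ hmonic, Lagrange.nodal_eq, prod_X_sub_C_nextCoeff, hsum] at key
  simpa [P, eval_prod, add_comm, mul_comm, div_eq_mul_inv] using key.symm

theorem sum_snoc_single_mul_homCoord {F : ℕ} (i : Fin F) (c : ℝ) (x : Fin F → ℝ) :
    ∑ j, (Fin.snoc (Pi.single i 1) c : Fin (F + 1) → ℝ) j * homCoord x j = x i + c := by
  simp [Fin.sum_univ_castSucc, homCoord, Pi.single_apply]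

theorem cp_layer_computes_mean_aggregation_general
    (k F : ℕ) :
    ∃ (A : Fin (F + 1) → Fin (F * k) → ℝ) (B : Fin F → Fin (F * k) → ℝ),
      ∀ (x : Fin k → Fin F → ℝ) (i : Fin F),
        ∑ r : Fin (F * k),
            B i r * ∏ ℓ : Fin k, (∑ j : Fin (F + 1), A j r * homCoord (x ℓ) j)
          = (1 / (k : ℝ)) * ∑ ℓ : Fin k, x ℓ i := by
  obtain ⟨u, β, hβ⟩ := exists_sum_mul_prod_add_eq_sum (K := ℝ) k
  let e := (finProdFinEquiv (m := F) (n := k)).symm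
  refine ⟨fun j r => (Fin.snoc (Pi.single (e r).1 1) (u (e r).2) : Fin (F + 1) → ℝ) j,
    fun i r => if (e r).1 = i then β (e r).2 / k else 0, fun x i => ?_⟩
  rw [← e.symm.sum_comp, Fintype.sum_prod_type]
  simp only [Equiv.apply_symm_apply, sum_snoc_single_mul_homCoord, ite_mul, zero_mul,
    sum_ite_irrel, sum_const_zero, sum_ite_eq', mem_univ, if_true]
  rw [← hβ (fun ℓ => x ℓ i), mul_sum]
  exact sum_congr rfl fun ρ _ => by ring

/-- Theorem 2 (mean aggregation): a CP layer of rank `F·k` with linear activation can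
compute the mean aggregation function over `k` vectors in `ℝ^F`. -/
theorem cp_layer_computes_mean_aggregation
    (k F : ℕ) (hk : 0 < k) (hF : 0 < F) :
    ∃ (A : Fin (F + 1) → Fin (F * k) → ℝ) (B : Fin F → Fin (F * k) → ℝ),
      ∀ (x : Fin k → Fin F → ℝ) (i : Fin F),
        ∑ r : Fin (F * k),
            B i r * ∏ ℓ : Fin k, (∑ j : Fin (F + 1), A j r * homCoord (x ℓ) j)
          = (1 / (k : ℝ)) * ∑ ℓ : Fin k, x ℓ i :=
  cp_layer_computes_mean_aggregation_general k F
end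

section
/- Let F ≥ 1 and k ≥ 2. For the rank-one CP layer f_{w,a} : (ℝ^F)^k → ℝ defined by f_{w,a}(x_1,…,x_k) = a ∏_{ℓ=1}^k ( ∑_{j=1}^F w_j (x_ℓ)_j + w_{F+1} ) with parameters w ∈ ℝ^{F+1} and a ∈ ℝ, the set of parameters (w, a) ∈ ℝ^{F+2} for which f_{w,a} is a function of the sum of its arguments (i.e., for which f_{w,a}(x_1,…,x_k) = f_{w,a}(y_1,…,y_k) whenever ∑_ℓ x_ℓ = ∑_ℓ y_ℓ) has Lebesgue measure zero in ℝ^{F+2}. -/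
open MeasureTheory

/-!
If `a ≠ 0` and `w₁ ≠ 0`, the affine form `L x = ⟨w, x̃⟩` is onto, so `L p = 1` and `L q = 0` for
some `p, q`. The tuples `(p, …, p)` and `(k p - (k - 1) q, q, …, q)` have the same sum, but since
`k ≥ 2` the layer takes the values `a` and `0` on them. Hence the parameter set lies in the union
of the hyperplanes `a = 0` and `w₁ = 0`, which is Lebesgue-null.
-/

def IsFunctionOfSum {k : ℕ} {V R : Type*} [AddCommMonoid V] (f : (Fin k → V) → R) : Prop :=
  ∀ x y : Fin k → V, ∑ ℓ, x ℓ = ∑ ℓ, y ℓ → f x = f y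

theorem IsFunctionOfSum.eq_zero_of_mul_prod {k : ℕ} {V R : Type*} [AddCommGroup V]
    [CommMonoidWithZero R] {g : V → R} {a : R}
    (h : IsFunctionOfSum fun x : Fin k → V ↦ a * ∏ ℓ, g (x ℓ))
    (hk : 2 ≤ k) {p q : V} (hp : g p = 1) (hq : g q = 0) : a = 0 := by
  obtain ⟨m, rfl⟩ : ∃ m, k = m + 2 := ⟨k - 2, by omega⟩
  have := h (fun _ ↦ p) (Fin.cons ((m + 2) • p - (m + 1) • q) fun _ ↦ q) <| by
    simp [Fin.sum_univ_succ]
  simpa [Fin.prod_univ_succ, hp, hq] using this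

theorem sum_mul_homCoord {F : ℕ} (w : Fin (F + 1) → ℝ) (x : Fin F → ℝ) :
    ∑ j, w j * homCoord x j = ∑ i, w i.castSucc * x i + w (Fin.last F) := by
  simp [Fin.sum_univ_castSucc, homCoord]

theorem exists_sum_mul_homCoord_eq {F : ℕ} {w : Fin (F + 1) → ℝ} {i : Fin F}
    (hw : w i.castSucc ≠ 0) (r : ℝ) : ∃ x : Fin F → ℝ, ∑ j, w j * homCoord x j = r := by
  refine ⟨Pi.single i ((r - w (Fin.last F)) / w i.castSucc), ?_⟩
  rw [sum_mul_homCoord]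
  simp [Pi.single_apply, mul_div_cancel₀ _ hw]

theorem volume_setOf_snd_eq_zero (E : Type*) [MeasureSpace E] :
    volume {p : E × ℝ | p.2 = 0} = 0 := by
  have : {p : E × ℝ | p.2 = 0} = Set.univ ×ˢ {0} := by ext; simp
  rw [this, Measure.volume_eq_prod, Measure.prod_prod]
  simp

theorem volume_setOf_fst_apply_eq_zero {n : ℕ} (i : Fin n) :
    volume {p : (Fin n → ℝ) × ℝ | p.1 i = 0} = 0 := by
  have : {p : (Fin n → ℝ) × ℝ | p.1 i = 0} = {f | f i = 0} ×ˢ Set.univ := by ext; simp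
  rw [this, Measure.volume_eq_prod, Measure.prod_prod, volume_pi, Measure.pi_hyperplane]
  simp

/-- For `F ≥ 1` and `k ≥ 2`, the set of parameters `(w, a)` for which the rank-one CP
layer `(x_1,…,x_k) ↦ a ∏_ℓ ⟨w, x̃_ℓ⟩` is a function of the sum of its arguments has
Lebesgue measure zero in `ℝ^{F+2}`. -/
theorem rank_one_cp_layer_function_of_sum_measure_zero
    (k F : ℕ) (hF : 1 ≤ F) (hk : 2 ≤ k) :
    volume {p : (Fin (F + 1) → ℝ) × ℝ |
      ∀ (x y : Fin k → Fin F → ℝ),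
        (∑ ℓ : Fin k, x ℓ) = (∑ ℓ : Fin k, y ℓ) →
        p.2 * ∏ ℓ : Fin k, (∑ j : Fin (F + 1), p.1 j * homCoord (x ℓ) j)
          = p.2 * ∏ ℓ : Fin k, (∑ j : Fin (F + 1), p.1 j * homCoord (y ℓ) j)} = 0 := by
  let i : Fin F := ⟨0, hF⟩
  refine measure_mono_null (t := {p | p.2 = 0} ∪ {p | p.1 i.castSucc = 0}) ?_
    (measure_union_null (volume_setOf_snd_eq_zero _) (volume_setOf_fst_apply_eq_zero _))
  rintro ⟨w, a⟩ hfun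
  rw [Set.mem_union]
  by_contra! ⟨ha, hw⟩
  obtain ⟨x₁, hx₁⟩ := exists_sum_mul_homCoord_eq hw 1
  obtain ⟨x₀, hx₀⟩ := exists_sum_mul_homCoord_eq hw 0
  exact ha (IsFunctionOfSum.eq_zero_of_mul_prod (g := fun v ↦ ∑ j, w j * homCoord v j)
    hfun hk hx₁ hx₀)
end
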